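/- Suppose the admissible family {X(τ):τ∈S_0} is RCE and sup_{τ∈S_0} E[X(τ)] < ∞. Then the family of value functions {v(τ):τ∈S_0} is RCE. -/

import Mathlib

open MeasureTheory Filter Set

noncomputable section

namespace OptMultStop

variable {Ω : Type*}

/-- A real function is right-continuous with left limits (RCLL) on `[0, T]`. -/
def RCLLOn (f : ℝ → ℝ) (T : ℝ) : Prop :=
  (∀ t ∈ Set.Ico (0 : ℝ) T, ContinuousWithinAt f (Set.Ici t) t) ∧
    ∀ t ∈ Set.Ioc (0 : ℝ) T, ∃ l : ℝ, Filter.Tendsto f (nhdsWithin t (Set.Iio t)) (nhds l)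

/-- A real function is right-continuous on `[0, T)`. -/
def RCOn (f : ℝ → ℝ) (T : ℝ) : Prop :=
  ∀ t ∈ Set.Ico (0 : ℝ) T, ContinuousWithinAt f (Set.Ici t) t

/-- `τ` is a stopping time for `ℱ` taking values in `[s ·, T]`; for `s = S` a stopping
time this encodes membership in `S_S`. -/
def IsStopIn [m : MeasurableSpace Ω] (ℱ : Filtration ℝ m) (T : ℝ) (s τ : Ω → ℝ) : Prop :=
  IsStoppingTime ℱ (fun ω => (τ ω : WithTop ℝ)) ∧ (∀ ω, s ω ≤ τ ω) ∧ ∀ ω, τ ω ≤ T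

/-- Membership in `S_0`: a stopping time with values in `[0, T]`. -/
def Stop0 [m : MeasurableSpace Ω] (ℱ : Filtration ℝ m) (T : ℝ) (τ : Ω → ℝ) : Prop :=
  IsStopIn ℱ T (fun _ => (0 : ℝ)) τ

/-- `g` is an essential supremum of the family of random variables `s`. -/
def IsEssSupFam [MeasurableSpace Ω] (μ : Measure Ω) (s : Set (Ω → ℝ)) (g : Ω → ℝ) : Prop :=
  (∀ f ∈ s, f ≤ᵐ[μ] g) ∧ ∀ h : Ω → ℝ, (∀ f ∈ s, f ≤ᵐ[μ] h) → g ≤ᵐ[μ] h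

/-- `g` is an essential infimum of the family of random variables `s`. -/
def IsEssInfFam [MeasurableSpace Ω] (μ : Measure Ω) (s : Set (Ω → ℝ)) (g : Ω → ℝ) : Prop :=
  (∀ f ∈ s, g ≤ᵐ[μ] f) ∧ ∀ h : Ω → ℝ, (∀ f ∈ s, h ≤ᵐ[μ] f) → h ≤ᵐ[μ] g

/-- An `𝔽`-consistent nonlinear expectation `(E, Dom(E))` on the horizon `[0, T]`,
together with its conditional versions at stopping times, satisfying the domain
axioms (D1)-(D3), (A1)-(A4) at stopping times, and hypotheses (H0)-(H5). -/
structure FExp [m : MeasurableSpace Ω] (μ : Measure Ω) (T : ℝ) (ℱ : Filtration ℝ m) where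
  /-- the domain `Dom(E)` -/
  Dom : Set (Ω → ℝ)
  /-- `cond τ ξ` is the conditional expectation `E_τ[ξ]` at the stopping time `τ` -/
  cond : (Ω → ℝ) → (Ω → ℝ) → Ω → ℝ
  /-- `E0 ξ` is the (deterministic) value `E[ξ] = E_0[ξ]` -/
  E0 : (Ω → ℝ) → ℝ
  zero_mem : (fun _ => (0 : ℝ)) ∈ Dom
  one_mem : (fun _ => (1 : ℝ)) ∈ Dom
  /-- (H4): all constants belong to the domain -/
  const_mem : ∀ c : ℝ, (fun _ => c) ∈ Dom
  add_mem : ∀ {ξ η : Ω → ℝ}, ξ ∈ Dom → η ∈ Dom → ξ + η ∈ Dom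
  indicator_mem : ∀ {ξ : Ω → ℝ}, ξ ∈ Dom → ∀ {A : Set Ω}, MeasurableSet A →
    A.indicator ξ ∈ Dom
  sandwich_mem : ∀ {ξ η : Ω → ℝ}, η ∈ Dom → (∀ᵐ ω ∂μ, 0 ≤ ξ ω ∧ ξ ω ≤ η ω) → ξ ∈ Dom
  cond_mem : ∀ {τ ξ : Ω → ℝ}, Stop0 ℱ T τ → ξ ∈ Dom → 0 ≤ᵐ[μ] ξ → cond τ ξ ∈ Dom
  cond_nonneg : ∀ {τ ξ : Ω → ℝ}, Stop0 ℱ T τ → ξ ∈ Dom → 0 ≤ᵐ[μ] ξ → 0 ≤ᵐ[μ] cond τ ξ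
  /-- `E_τ[ξ]` is `F_τ`-measurable -/
  cond_adapted : ∀ {τ ξ : Ω → ℝ} (hτ : Stop0 ℱ T τ), ξ ∈ Dom → 0 ≤ᵐ[μ] ξ →
    Measurable[hτ.1.measurableSpace] (cond τ ξ)
  /-- monotonicity -/
  mono : ∀ {τ ξ η : Ω → ℝ}, Stop0 ℱ T τ → ξ ∈ Dom → 0 ≤ᵐ[μ] ξ → η ∈ Dom → 0 ≤ᵐ[μ] η →
    ξ ≤ᵐ[μ] η → cond τ ξ ≤ᵐ[μ] cond τ η
  /-- strict monotonicity -/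
  strict_mono : ∀ {τ ξ η : Ω → ℝ}, Stop0 ℱ T τ → ξ ∈ Dom → 0 ≤ᵐ[μ] ξ → η ∈ Dom →
    0 ≤ᵐ[μ] η → ξ ≤ᵐ[μ] η → cond τ ξ =ᵐ[μ] cond τ η → ξ =ᵐ[μ] η
  /-- time consistency -/
  time_consistent : ∀ {σ τ ξ : Ω → ℝ}, Stop0 ℱ T σ → Stop0 ℱ T τ → (∀ ω, σ ω ≤ τ ω) →
    ξ ∈ Dom → 0 ≤ᵐ[μ] ξ → cond σ (cond τ ξ) =ᵐ[μ] cond σ ξ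
  /-- zero-one law -/
  zero_one : ∀ {τ ξ : Ω → ℝ} (hτ : Stop0 ℱ T τ), ξ ∈ Dom → 0 ≤ᵐ[μ] ξ →
    ∀ {A : Set Ω}, MeasurableSet[hτ.1.measurableSpace] A →
    cond τ (A.indicator ξ) =ᵐ[μ] A.indicator (cond τ ξ)
  /-- translation invariance -/
  translation : ∀ {τ ξ η : Ω → ℝ} (hτ : Stop0 ℱ T τ), ξ ∈ Dom → 0 ≤ᵐ[μ] ξ → η ∈ Dom →
    0 ≤ᵐ[μ] η → Measurable[hτ.1.measurableSpace] η → cond τ (ξ + η) =ᵐ[μ] cond τ ξ + η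
  /-- `F_0` is trivial: `E_0[ξ]` is the constant `E0 ξ` -/
  E0_eq : ∀ {ξ : Ω → ℝ}, ξ ∈ Dom → 0 ≤ᵐ[μ] ξ →
    cond (fun _ => (0 : ℝ)) ξ =ᵐ[μ] fun _ => E0 ξ
  /-- the process `t ↦ E_t[ξ]` has RCLL paths -/
  rcll_paths : ∀ {ξ : Ω → ℝ}, ξ ∈ Dom → 0 ≤ᵐ[μ] ξ →
    ∀ᵐ ω ∂μ, RCLLOn (fun t => cond (fun _ => t) ξ ω) T
  /-- (H0) -/
  h0 : ∀ {A : Set Ω}, MeasurableSet A → 0 < μ A →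
    Tendsto (fun n : ℕ => E0 (A.indicator fun _ => (n : ℝ))) atTop atTop
  /-- (H1) -/
  h1 : ∀ {ξ : Ω → ℝ}, ξ ∈ Dom → 0 ≤ᵐ[μ] ξ → ∀ {A : ℕ → Set Ω},
    (∀ n, MeasurableSet (A n)) → Monotone A → (∀ᵐ ω ∂μ, ω ∈ ⋃ n, A n) →
    Tendsto (fun n => E0 ((A n).indicator ξ)) atTop (nhds (E0 ξ))
  /-- (H2) -/
  h2 : ∀ {ξ η : Ω → ℝ}, ξ ∈ Dom → 0 ≤ᵐ[μ] ξ → η ∈ Dom → 0 ≤ᵐ[μ] η →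
    ∀ {A : ℕ → Set Ω}, (∀ n, MeasurableSet (A n)) → Antitone A →
    (∀ᵐ ω ∂μ, ω ∉ ⋂ n, A n) →
    Tendsto (fun n => E0 (ξ + (A n).indicator η)) atTop (nhds (E0 ξ))
  /-- (H5) -/
  h5 : ∀ {ξ : ℕ → Ω → ℝ} {ζ : Ω → ℝ}, (∀ n, ξ n ∈ Dom) → (∀ n, 0 ≤ᵐ[μ] ξ n) →
    (∀ᵐ ω ∂μ, Tendsto (fun n => ξ n ω) atTop (nhds (ζ ω))) →
    (∃ C : ℝ, ∃ᶠ n in atTop, E0 (ξ n) ≤ C) → ζ ∈ Dom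

variable [m : MeasurableSpace Ω] {μ : Measure Ω} {T : ℝ} {ℱ : Filtration ℝ m}

/-- (H6): sub-additivity. -/
def FExp.Subadditive (𝔈 : FExp μ T ℱ) : Prop :=
  ∀ ⦃τ ξ η : Ω → ℝ⦄, Stop0 ℱ T τ → ξ ∈ 𝔈.Dom → 0 ≤ᵐ[μ] ξ → η ∈ 𝔈.Dom → 0 ≤ᵐ[μ] η →
    𝔈.cond τ (ξ + η) ≤ᵐ[μ] 𝔈.cond τ ξ + 𝔈.cond τ η

/-- (H7): positive homogeneity. -/
def FExp.PosHom (𝔈 : FExp μ T ℱ) : Prop :=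
  ∀ ⦃τ ξ : Ω → ℝ⦄ (l : ℝ), 0 ≤ l → Stop0 ℱ T τ → ξ ∈ 𝔈.Dom → 0 ≤ᵐ[μ] ξ →
    𝔈.cond τ (fun ω => l * ξ ω) =ᵐ[μ] fun ω => l * 𝔈.cond τ ξ ω

/-- Admissible family of rewards indexed by stopping times. -/
def Admissible (𝔈 : FExp μ T ℱ) (X : (Ω → ℝ) → Ω → ℝ) : Prop :=
  (∀ τ : Ω → ℝ, ∀ hτ : Stop0 ℱ T τ, X τ ∈ 𝔈.Dom ∧ 0 ≤ᵐ[μ] X τ ∧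
      Measurable[hτ.1.measurableSpace] (X τ)) ∧
    ∀ τ σ : Ω → ℝ, Stop0 ℱ T τ → Stop0 ℱ T σ →
      ∀ᵐ ω ∂μ, τ ω = σ ω → X τ ω = X σ ω

/-- `sup_{τ ∈ S_0} E[X(τ)] < ∞`. -/
def BddRewardE0 (𝔈 : FExp μ T ℱ) (X : (Ω → ℝ) → Ω → ℝ) : Prop :=
  ∃ C : ℝ, ∀ τ : Ω → ℝ, Stop0 ℱ T τ → 𝔈.E0 (X τ) ≤ C

/-- `v` is the value function family of the single stopping problem for the reward `X`:
`v(S) = esssup_{τ ∈ S_S} E_S[X(τ)]`. -/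
def IsValueFam (𝔈 : FExp μ T ℱ) (X v : (Ω → ℝ) → Ω → ℝ) : Prop :=
  ∀ S : Ω → ℝ, Stop0 ℱ T S →
    IsEssSupFam μ {g | ∃ τ : Ω → ℝ, IsStopIn ℱ T S τ ∧ g = 𝔈.cond S (X τ)} (v S)

/-- An `E`-supermartingale system. -/
def SupermartSys (𝔈 : FExp μ T ℱ) (h : (Ω → ℝ) → Ω → ℝ) : Prop :=
  (∀ τ : Ω → ℝ, ∀ hτ : Stop0 ℱ T τ, h τ ∈ 𝔈.Dom ∧ 0 ≤ᵐ[μ] h τ ∧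
      Measurable[hτ.1.measurableSpace] (h τ)) ∧
    ∀ τ σ : Ω → ℝ, Stop0 ℱ T τ → Stop0 ℱ T σ → (∀ᵐ ω ∂μ, τ ω ≤ σ ω) →
      𝔈.cond τ (h σ) ≤ᵐ[μ] h τ

/-- Right-continuity along stopping times in `E`-expectation (RCE). -/
def RCE (𝔈 : FExp μ T ℱ) (X : (Ω → ℝ) → Ω → ℝ) : Prop :=
  ∀ τ : Ω → ℝ, Stop0 ℱ T τ → ∀ τs : ℕ → Ω → ℝ, (∀ n, Stop0 ℱ T (τs n)) →
    (∀ᵐ ω ∂μ, Antitone (fun n => τs n ω) ∧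
      Tendsto (fun n => τs n ω) atTop (nhds (τ ω))) →
    Tendsto (fun n => 𝔈.E0 (X (τs n))) atTop (nhds (𝔈.E0 (X τ)))

/-- Left-continuity along stopping times in `E`-expectation (LCE). -/
def LCE (𝔈 : FExp μ T ℱ) (X : (Ω → ℝ) → Ω → ℝ) : Prop :=
  ∀ τ : Ω → ℝ, Stop0 ℱ T τ → ∀ τs : ℕ → Ω → ℝ, (∀ n, Stop0 ℱ T (τs n)) →
    (∀ᵐ ω ∂μ, Monotone (fun n => τs n ω) ∧
      Tendsto (fun n => τs n ω) atTop (nhds (τ ω))) →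
    Tendsto (fun n => 𝔈.E0 (X (τs n))) atTop (nhds (𝔈.E0 (X τ)))

/-- Continuity along stopping times in `E`-expectation (CE). -/
def CE (𝔈 : FExp μ T ℱ) (X : (Ω → ℝ) → Ω → ℝ) : Prop :=
  RCE 𝔈 X ∧ LCE 𝔈 X

/-- Right-continuity along stopping times (RC): a.s. pointwise convergence. -/
def RCfam (𝔈 : FExp μ T ℱ) (X : (Ω → ℝ) → Ω → ℝ) : Prop :=
  ∀ τ : Ω → ℝ, Stop0 ℱ T τ → ∀ τs : ℕ → Ω → ℝ, (∀ n, Stop0 ℱ T (τs n)) →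
    (∀ᵐ ω ∂μ, Antitone (fun n => τs n ω) ∧
      Tendsto (fun n => τs n ω) atTop (nhds (τ ω))) →
    ∀ᵐ ω ∂μ, Tendsto (fun n => X (τs n) ω) atTop (nhds (X τ ω))

/-- Biadmissible family of rewards indexed by pairs of stopping times. -/
def Biadmissible (𝔈 : FExp μ T ℱ) (X : (Ω → ℝ) → (Ω → ℝ) → Ω → ℝ) : Prop :=
  (∀ τ σ : Ω → ℝ, ∀ hτ : Stop0 ℱ T τ, ∀ hσ : Stop0 ℱ T σ,
      X τ σ ∈ 𝔈.Dom ∧ 0 ≤ᵐ[μ] X τ σ ∧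
      Measurable[(hτ.1.max hσ.1).measurableSpace] (X τ σ)) ∧
    ∀ τ σ τ' σ' : Ω → ℝ, Stop0 ℱ T τ → Stop0 ℱ T σ → Stop0 ℱ T τ' → Stop0 ℱ T σ' →
      ∀ᵐ ω ∂μ, τ ω = τ' ω → σ ω = σ' ω → X τ σ ω = X τ' σ' ω

/-- `sup_{τ,σ ∈ S_0} E[X(τ,σ)] < ∞`. -/
def BddReward2E0 (𝔈 : FExp μ T ℱ) (X : (Ω → ℝ) → (Ω → ℝ) → Ω → ℝ) : Prop :=
  ∃ C : ℝ, ∀ τ σ : Ω → ℝ, Stop0 ℱ T τ → Stop0 ℱ T σ → 𝔈.E0 (X τ σ) ≤ C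

/-- `v` is the value function family of the double stopping problem:
`v(S) = esssup_{τ₁,τ₂ ∈ S_S} E_S[X(τ₁,τ₂)]`. -/
def IsValueFam2 (𝔈 : FExp μ T ℱ) (X : (Ω → ℝ) → (Ω → ℝ) → Ω → ℝ)
    (v : (Ω → ℝ) → Ω → ℝ) : Prop :=
  ∀ S : Ω → ℝ, Stop0 ℱ T S →
    IsEssSupFam μ
      {g | ∃ τ₁ τ₂ : Ω → ℝ, IsStopIn ℱ T S τ₁ ∧ IsStopIn ℱ T S τ₂ ∧
        g = 𝔈.cond S (X τ₁ τ₂)} (v S)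

/-- `u₁(θ) = esssup_{τ₁ ∈ S_θ} E_θ[X(τ₁, θ)]`. -/
def IsU1 (𝔈 : FExp μ T ℱ) (X : (Ω → ℝ) → (Ω → ℝ) → Ω → ℝ) (u₁ : (Ω → ℝ) → Ω → ℝ) : Prop :=
  ∀ θ : Ω → ℝ, Stop0 ℱ T θ →
    IsEssSupFam μ {g | ∃ τ : Ω → ℝ, IsStopIn ℱ T θ τ ∧ g = 𝔈.cond θ (X τ θ)} (u₁ θ)

/-- `u₂(θ) = esssup_{τ₂ ∈ S_θ} E_θ[X(θ, τ₂)]`. -/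
def IsU2 (𝔈 : FExp μ T ℱ) (X : (Ω → ℝ) → (Ω → ℝ) → Ω → ℝ) (u₂ : (Ω → ℝ) → Ω → ℝ) : Prop :=
  ∀ θ : Ω → ℝ, Stop0 ℱ T θ →
    IsEssSupFam μ {g | ∃ τ : Ω → ℝ, IsStopIn ℱ T θ τ ∧ g = 𝔈.cond θ (X θ τ)} (u₂ θ)

/-- Uniform right-continuity of a biadmissible family along stopping times in
`ℰ`-expectation (URCℰ). -/
def URCE2 (ℰ : FExp μ T ℱ) (X : (Ω → ℝ) → (Ω → ℝ) → Ω → ℝ) : Prop :=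
  ∀ σ : Ω → ℝ, Stop0 ℱ T σ → ∀ σs : ℕ → Ω → ℝ, (∀ n, Stop0 ℱ T (σs n)) →
    (∀ᵐ ω ∂μ, Antitone (fun n => σs n ω) ∧
      Tendsto (fun n => σs n ω) atTop (nhds (σ ω))) →
    ∀ ε : ℝ, 0 < ε → ∃ N : ℕ, ∀ n ≥ N, ∀ τ : Ω → ℝ, Stop0 ℱ T τ →
      ℰ.E0 (fun ω => |X τ σ ω - X τ (σs n) ω|) ≤ ε ∧
      ℰ.E0 (fun ω => |X σ τ ω - X (σs n) τ ω|) ≤ ε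

/-- Uniform left-continuity of a biadmissible family along stopping times in
`ℰ`-expectation (ULCℰ). -/
def ULCE2 (ℰ : FExp μ T ℱ) (X : (Ω → ℝ) → (Ω → ℝ) → Ω → ℝ) : Prop :=
  ∀ σ : Ω → ℝ, Stop0 ℱ T σ → ∀ σs : ℕ → Ω → ℝ, (∀ n, Stop0 ℱ T (σs n)) →
    (∀ᵐ ω ∂μ, Monotone (fun n => σs n ω) ∧
      Tendsto (fun n => σs n ω) atTop (nhds (σ ω))) →
    ∀ ε : ℝ, 0 < ε → ∃ N : ℕ, ∀ n ≥ N, ∀ τ : Ω → ℝ, Stop0 ℱ T τ →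
      ℰ.E0 (fun ω => |X τ σ ω - X τ (σs n) ω|) ≤ ε ∧
      ℰ.E0 (fun ω => |X σ τ ω - X (σs n) τ ω|) ≤ ε

/-- Uniform continuity (UCℰ) of a biadmissible family. -/
def UCE2 (ℰ : FExp μ T ℱ) (X : (Ω → ℝ) → (Ω → ℝ) → Ω → ℝ) : Prop :=
  URCE2 ℰ X ∧ ULCE2 ℰ X

/-- `(E, Dom(E))` is dominated by `(Ẽ, Dom(Ẽ))`. -/
def Dominated (𝔈 𝔉 : FExp μ T ℱ) : Prop :=
  𝔈.Dom ⊆ 𝔉.Dom ∧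
    ∀ τ : Ω → ℝ, Stop0 ℱ T τ → ∀ ξ η : Ω → ℝ, ξ ∈ 𝔈.Dom → η ∈ 𝔈.Dom →
      ∀ᵐ ω ∂μ, 𝔈.cond τ (ξ + η) ω - 𝔈.cond τ η ω ≤ 𝔉.cond τ ξ ω

/-- The filtration contains all `μ`-null sets (part of the usual conditions). -/
def CompleteFiltration (μ : Measure Ω) (ℱ : Filtration ℝ m) : Prop :=
  ∀ s : Set Ω, μ s = 0 → ∀ t : ℝ, MeasurableSet[ℱ t] s

/-- The filtration is right-continuous (part of the usual conditions). -/
def RightContinuousFiltration (ℱ : Filtration ℝ m) : Prop :=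
  ∀ t : ℝ, (ℱ t : MeasurableSpace Ω) = ⨅ u ∈ Set.Ioi t, ℱ u

/-- A `d`-tuple of stopping times, all in `S_s`. -/
def StopVec (ℱ : Filtration ℝ m) (T : ℝ) (s : Ω → ℝ) {d : ℕ} (τ : Fin d → Ω → ℝ) : Prop :=
  ∀ i, IsStopIn ℱ T s (τ i)

/-- A `d`-admissible family of rewards. -/
def DAdmissible (𝔈 : FExp μ T ℱ) {d : ℕ} (X : (Fin d → Ω → ℝ) → Ω → ℝ) : Prop :=
  (∀ τ : Fin d → Ω → ℝ, StopVec ℱ T (fun _ => (0 : ℝ)) τ →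
      X τ ∈ 𝔈.Dom ∧ 0 ≤ᵐ[μ] X τ ∧
      ∀ h : IsStoppingTime ℱ fun ω => ((⨆ i, τ i ω : ℝ) : WithTop ℝ),
        Measurable[h.measurableSpace] (X τ)) ∧
    ∀ τ σ : Fin d → Ω → ℝ, StopVec ℱ T (fun _ => (0 : ℝ)) τ →
      StopVec ℱ T (fun _ => (0 : ℝ)) σ →
      ∀ᵐ ω ∂μ, (∀ i, τ i ω = σ i ω) → X τ ω = X σ ω

/-- `sup_{τ ∈ S_0^d} E[X(τ)] < ∞`. -/
def BddRewardDE0 (𝔈 : FExp μ T ℱ) {d : ℕ} (X : (Fin d → Ω → ℝ) → Ω → ℝ) : Prop :=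
  ∃ C : ℝ, ∀ τ : Fin d → Ω → ℝ, StopVec ℱ T (fun _ => (0 : ℝ)) τ → 𝔈.E0 (X τ) ≤ C

/-- `v` is the value function family of the `d`-stopping problem:
`v(S) = esssup_{τ ∈ S_S^d} E_S[X(τ)]`. -/
def IsValueFamD (𝔈 : FExp μ T ℱ) {d : ℕ} (X : (Fin d → Ω → ℝ) → Ω → ℝ)
    (v : (Ω → ℝ) → Ω → ℝ) : Prop :=
  ∀ S : Ω → ℝ, Stop0 ℱ T S →
    IsEssSupFam μ
      {g | ∃ τ : Fin d → Ω → ℝ, StopVec ℱ T S τ ∧ g = 𝔈.cond S (X τ)} (v S)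

/-- `u^{(i)}(θ) = esssup_{τ ∈ S_θ^{d-1}} E_θ[X^{(i)}(τ, θ)]`, where `X^{(i)}(τ, θ)`
inserts `θ` in the `i`-th slot. -/
def IsUi (𝔈 : FExp μ T ℱ) {d : ℕ} (X : (Fin (d + 1) → Ω → ℝ) → Ω → ℝ)
    (ui : Fin (d + 1) → (Ω → ℝ) → Ω → ℝ) : Prop :=
  ∀ i : Fin (d + 1), ∀ θ : Ω → ℝ, Stop0 ℱ T θ →
    IsEssSupFam μ
      {g | ∃ τ : Fin d → Ω → ℝ, StopVec ℱ T θ τ ∧ g = 𝔈.cond θ (X (i.insertNth θ τ))}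
      (ui i θ)

/-- Uniform continuity (UCE) of a `d`-admissible family along monotone sequences of
stopping times. -/
def UCED (𝔈 : FExp μ T ℱ) {d : ℕ} (X : (Fin (d + 1) → Ω → ℝ) → Ω → ℝ) : Prop :=
  ∀ i : Fin (d + 1), ∀ S : Ω → ℝ, Stop0 ℱ T S → ∀ Ss : ℕ → Ω → ℝ,
    (∀ n, Stop0 ℱ T (Ss n)) →
    ((∀ᵐ ω ∂μ, Monotone fun n => Ss n ω) ∨ (∀ᵐ ω ∂μ, Antitone fun n => Ss n ω)) →
    (∀ᵐ ω ∂μ, Tendsto (fun n => Ss n ω) atTop (nhds (S ω))) →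
    ∀ ε : ℝ, 0 < ε → ∃ N : ℕ, ∀ n ≥ N, ∀ θ : Fin d → Ω → ℝ,
      StopVec ℱ T (fun _ => (0 : ℝ)) θ →
      𝔈.E0 (fun ω => |X (i.insertNth (Ss n) θ) ω - X (i.insertNth S θ) ω|) ≤ ε


/-!
The key identity is `E[v(σ)] = sup_{ρ ∈ S_σ} E[X(ρ)]`. Pasting two stopping times along the
`F_σ`-set where one conditional reward dominates the other shows that `{E_σ[X(ρ)] : ρ ∈ S_σ}` is
directed upwards, so its essential supremum is the increasing limit of a maximizing sequence:
(H0) and (H1) keep that limit finite, (H5) puts it in `Dom(E)`, (H1) gives monotone convergence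
of `E`, and strict monotonicity shows that the limit dominates every member of the family.
Given the identity, `σ ↦ sup_{ρ ∈ S_σ} E[X(ρ)]` is antitone, and for `ρ ∈ S_τ` the times
`ρ ∨ τₙ ∈ S_{τₙ}` decrease to `ρ`, so RCE of `X` bounds `E[v(τₙ)]` from below.
-/

open scoped Topology

section StoppingTimes

variable {s s' σ ρ τ₁ τ₂ : Ω → ℝ}

lemma stop0_zero (hT : 0 ≤ T) : Stop0 ℱ T fun _ => (0 : ℝ) :=
  ⟨isStoppingTime_const ℱ (0 : ℝ), fun _ => le_rfl, fun _ => hT⟩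

lemma IsStopIn.trans (hσ : IsStopIn ℱ T s σ) (hρ : IsStopIn ℱ T σ ρ) : IsStopIn ℱ T s ρ :=
  ⟨hρ.1, fun ω => (hσ.2.1 ω).trans (hρ.2.1 ω), hρ.2.2⟩

lemma IsStopIn.self (hσ : IsStopIn ℱ T s σ) : IsStopIn ℱ T σ σ :=
  ⟨hσ.1, fun _ => le_rfl, hσ.2.2⟩

lemma IsStopIn.max (hρ : IsStopIn ℱ T s ρ) (hσ : IsStopIn ℱ T s' σ) :
    IsStopIn ℱ T σ fun ω => max (ρ ω) (σ ω) :=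
  ⟨hρ.1.max hσ.1, fun _ => le_max_right _ _, fun ω => max_le (hρ.2.2 ω) (hσ.2.2 ω)⟩

lemma IsStopIn.piecewise (hσ : IsStoppingTime ℱ fun ω => (σ ω : WithTop ℝ)) {A : Set Ω}
    [DecidablePred (· ∈ A)] (hA : MeasurableSet[hσ.measurableSpace] A) (h₁ : IsStopIn ℱ T σ τ₁)
    (h₂ : IsStopIn ℱ T σ τ₂) : IsStopIn ℱ T σ (A.piecewise τ₁ τ₂) := by
  refine ⟨fun t => ?_, fun ω => ?_, fun ω => ?_⟩
  · have hAt := ((hσ.measurableSet A).1 hA).2 t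
    have hAct := ((hσ.measurableSet Aᶜ).1 hA.compl).2 t
    have hset : {ω | ((A.piecewise τ₁ τ₂ ω : ℝ) : WithTop ℝ) ≤ t} =
        (A ∩ {ω | (σ ω : WithTop ℝ) ≤ t}) ∩ {ω | (τ₁ ω : WithTop ℝ) ≤ t} ∪
          (Aᶜ ∩ {ω | (σ ω : WithTop ℝ) ≤ t}) ∩ {ω | (τ₂ ω : WithTop ℝ) ≤ t} := by
      ext ω
      by_cases hω : ω ∈ A
      · simpa [hω] using fun h : τ₁ ω ≤ t => (h₁.2.1 ω).trans h
      · simpa [hω] using fun h : τ₂ ω ≤ t => (h₂.2.1 ω).trans h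
    rw [hset]
    exact (hAt.inter (h₁.1 t)).union (hAct.inter (h₂.1 t))
  · by_cases hω : ω ∈ A <;> simp [hω, h₁.2.1 ω, h₂.2.1 ω]
  · by_cases hω : ω ∈ A <;> simp [hω, h₁.2.2 ω, h₂.2.2 ω]

end StoppingTimes

lemma IsEssSupFam.ae_eq {s : Set (Ω → ℝ)} {g g' : Ω → ℝ} (h : IsEssSupFam μ s g)
    (h' : IsEssSupFam μ s g') : g =ᵐ[μ] g' :=
  (h.2 g' h'.1).antisymm (h'.2 g h.1)

lemma exists_ae_monotone_seq_of_directed {𝒢 : Set (Ω → ℝ)}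
    (hdir : ∀ f ∈ 𝒢, ∀ g ∈ 𝒢, ∃ h ∈ 𝒢, h =ᵐ[μ] fun ω => max (f ω) (g ω))
    {f : ℕ → Ω → ℝ} (hf : ∀ n, f n ∈ 𝒢) :
    ∃ g : ℕ → Ω → ℝ, (∀ n, g n ∈ 𝒢) ∧ (∀ n, f n ≤ᵐ[μ] g n) ∧
      ∀ᵐ ω ∂μ, Monotone fun n => g n ω := by
  choose! sup hsup𝒢 hsup using hdir
  let g : ℕ → Ω → ℝ := fun n => Nat.rec (f 0) (fun k gk => sup gk (f (k + 1))) n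
  have hg𝒢 : ∀ n, g n ∈ 𝒢 := fun n => by
    induction n with
    | zero => exact hf 0
    | succ k ih => exact hsup𝒢 _ ih _ (hf (k + 1))
  have hsucc : ∀ n, g (n + 1) =ᵐ[μ] fun ω => max (g n ω) (f (n + 1) ω) := fun n =>
    hsup _ (hg𝒢 n) _ (hf (n + 1))
  refine ⟨g, hg𝒢, fun n => ?_, ?_⟩
  · cases n with
    | zero => exact .rfl
    | succ k => exact (hsucc k).mono fun ω h => h ▸ le_max_right _ _
  · filter_upwards [ae_all_iff.2 hsucc] with ω h
    exact monotone_nat_of_le_succ fun n => (h n).symm ▸ le_max_left _ _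

def FExp.domPos (𝔈 : FExp μ T ℱ) : Set (Ω → ℝ) := {ξ | ξ ∈ 𝔈.Dom ∧ 0 ≤ᵐ[μ] ξ}

namespace FExp

variable {𝔈 : FExp μ T ℱ}

section

variable {σ ξ η : Ω → ℝ}

lemma indicator_mem_domPos (hξ : ξ ∈ 𝔈.domPos) {A : Set Ω} (hA : MeasurableSet A) :
    A.indicator ξ ∈ 𝔈.domPos :=
  ⟨𝔈.indicator_mem hξ.1 hA, hξ.2.mono fun _ h => Set.indicator_apply_nonneg fun _ => h⟩

lemma add_const_mem_domPos (hξ : ξ ∈ 𝔈.domPos) {c : ℝ} (hc : 0 ≤ c) :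
    (ξ + fun _ => c) ∈ 𝔈.domPos :=
  ⟨𝔈.add_mem hξ.1 (𝔈.const_mem c), hξ.2.mono fun _ h => add_nonneg h hc⟩

lemma mem_domPos_of_ae_eq (hη : η ∈ 𝔈.domPos) (h : ξ =ᵐ[μ] η) : ξ ∈ 𝔈.domPos := by
  have hξ0 : 0 ≤ᵐ[μ] ξ := hη.2.trans h.symm.le
  exact ⟨𝔈.sandwich_mem hη.1 (hξ0.and h.le), hξ0⟩

lemma cond_mem_domPos (hσ : Stop0 ℱ T σ) (hξ : ξ ∈ 𝔈.domPos) : 𝔈.cond σ ξ ∈ 𝔈.domPos :=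
  ⟨𝔈.cond_mem hσ hξ.1 hξ.2, 𝔈.cond_nonneg hσ hξ.1 hξ.2⟩

lemma measurable_cond (hσ : Stop0 ℱ T σ) (hξ : ξ ∈ 𝔈.domPos) : Measurable (𝔈.cond σ ξ) :=
  (𝔈.cond_adapted hσ hξ.1 hξ.2).mono hσ.1.measurableSpace_le le_rfl

lemma cond_congr (hσ : Stop0 ℱ T σ) (hξ : ξ ∈ 𝔈.domPos) (hη : η ∈ 𝔈.domPos)
    (h : ξ =ᵐ[μ] η) : 𝔈.cond σ ξ =ᵐ[μ] 𝔈.cond σ η :=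
  (𝔈.mono hσ hξ.1 hξ.2 hη.1 hη.2 h.le).antisymm (𝔈.mono hσ hη.1 hη.2 hξ.1 hξ.2 h.symm.le)

lemma indicator_cond_congr (hσ : Stop0 ℱ T σ) {A : Set Ω}
    (hA : MeasurableSet[hσ.1.measurableSpace] A) (hξ : ξ ∈ 𝔈.domPos) (hη : η ∈ 𝔈.domPos)
    (h : A.indicator ξ =ᵐ[μ] A.indicator η) :
    A.indicator (𝔈.cond σ ξ) =ᵐ[μ] A.indicator (𝔈.cond σ η) := by
  have hAm : MeasurableSet A := hσ.1.measurableSpace_le _ hA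
  exact (𝔈.zero_one hσ hξ.1 hξ.2 hA).symm.trans <|
    (cond_congr hσ (indicator_mem_domPos hξ hAm) (indicator_mem_domPos hη hAm) h).trans
      (𝔈.zero_one hσ hη.1 hη.2 hA)

variable [IsProbabilityMeasure μ]

lemma E0_mono (hT : 0 ≤ T) (hξ : ξ ∈ 𝔈.domPos) (hη : η ∈ 𝔈.domPos) (h : ξ ≤ᵐ[μ] η) :
    𝔈.E0 ξ ≤ 𝔈.E0 η :=
  eventually_const.1 <| (𝔈.E0_eq hξ.1 hξ.2).symm.le.trans <|
    (𝔈.mono (stop0_zero hT) hξ.1 hξ.2 hη.1 hη.2 h).trans (𝔈.E0_eq hη.1 hη.2).le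

lemma E0_congr (hT : 0 ≤ T) (hξ : ξ ∈ 𝔈.domPos) (hη : η ∈ 𝔈.domPos) (h : ξ =ᵐ[μ] η) :
    𝔈.E0 ξ = 𝔈.E0 η :=
  (E0_mono hT hξ hη h.le).antisymm (E0_mono hT hη hξ h.symm.le)

lemma E0_cond (hT : 0 ≤ T) (hσ : Stop0 ℱ T σ) (hξ : ξ ∈ 𝔈.domPos) :
    𝔈.E0 (𝔈.cond σ ξ) = 𝔈.E0 ξ := by
  have hσξ := cond_mem_domPos hσ hξ
  exact eventually_const.1 <| (𝔈.E0_eq hσξ.1 hσξ.2).symm.trans <|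
    (𝔈.time_consistent (stop0_zero hT) hσ hσ.2.1 hξ.1 hξ.2).trans (𝔈.E0_eq hξ.1 hξ.2)

lemma E0_add_const (hT : 0 ≤ T) (hξ : ξ ∈ 𝔈.domPos) {c : ℝ} (hc : 0 ≤ c) :
    𝔈.E0 (ξ + fun _ => c) = 𝔈.E0 ξ + c := by
  have hξc := add_const_mem_domPos hξ hc
  have htr := 𝔈.translation (stop0_zero hT) hξ.1 hξ.2 (𝔈.const_mem c)
    (Eventually.of_forall fun _ => hc) measurable_const
  refine (eventually_const (f := ae μ)).1 ?_
  filter_upwards [𝔈.E0_eq hξc.1 hξc.2, htr, 𝔈.E0_eq hξ.1 hξ.2] with ω h₁ h₂ h₃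
  rw [← h₁, h₂, Pi.add_apply, h₃]

lemma ae_eq_of_le_of_E0_le (hT : 0 ≤ T) (hξ : ξ ∈ 𝔈.domPos) (hη : η ∈ 𝔈.domPos)
    (hle : ξ ≤ᵐ[μ] η) (hE : 𝔈.E0 η ≤ 𝔈.E0 ξ) : ξ =ᵐ[μ] η := by
  have hE' : 𝔈.E0 ξ = 𝔈.E0 η := (E0_mono hT hξ hη hle).antisymm hE
  refine 𝔈.strict_mono (stop0_zero hT) hξ.1 hξ.2 hη.1 hη.2 hle ?_
  filter_upwards [𝔈.E0_eq hξ.1 hξ.2, 𝔈.E0_eq hη.1 hη.2] with ω h₁ h₂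
  rw [h₁, h₂, hE']

end

variable [IsProbabilityMeasure μ] {ξ : ℕ → Ω → ℝ} {t : ℝ}

lemma E0_le_of_ae_exists_le (hT : 0 ≤ T) {ζ : Ω → ℝ} (hζ : ζ ∈ 𝔈.domPos) (hζm : Measurable ζ)
    (hξ : ∀ n, ξ n ∈ 𝔈.domPos) (hξm : ∀ n, Measurable (ξ n))
    (hmono : ∀ᵐ ω ∂μ, Monotone fun n => ξ n ω) (hbd : ∀ n, 𝔈.E0 (ξ n) ≤ t) {c : ℝ}
    (hc : 0 ≤ c) (hex : ∀ᵐ ω ∂μ, ∃ n, ζ ω ≤ ξ n ω + c) : 𝔈.E0 ζ ≤ t + c := by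
  set A := Set.accumulate fun n => {ω | ζ ω ≤ ξ n ω + c}
  have hAm : ∀ n, MeasurableSet (A n) := fun n => by
    simp only [A, Set.accumulate_def]
    exact .biUnion (Set.to_countable _) fun k _ => measurableSet_le hζm ((hξm k).add_const c)
  have hcover : ∀ᵐ ω ∂μ, ω ∈ ⋃ n, A n := by
    rw [Set.iUnion_accumulate]
    filter_upwards [hex] with ω ⟨n, hn⟩
    exact Set.mem_iUnion.2 ⟨n, hn⟩
  have hAζ : ∀ n, 𝔈.E0 ((A n).indicator ζ) ≤ t + c := fun n => calc
    𝔈.E0 ((A n).indicator ζ) ≤ 𝔈.E0 (ξ n + fun _ => c) := by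
      refine E0_mono hT (indicator_mem_domPos hζ (hAm n)) (add_const_mem_domPos (hξ n) hc) ?_
      filter_upwards [hmono, (hξ n).2] with ω hω hω0
      refine Set.indicator_apply_le' (fun hωA => ?_) fun _ => add_nonneg hω0 hc
      obtain ⟨k, hk, hζk⟩ := Set.mem_accumulate.1 hωA
      have hζk : ζ ω ≤ ξ k ω + c := hζk
      have hkn : ξ k ω ≤ ξ n ω := hω hk
      simp only [Pi.add_apply]
      linarith
    _ = 𝔈.E0 (ξ n) + c := E0_add_const hT (hξ n) hc
    _ ≤ t + c := by linarith [hbd n]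
  exact le_of_tendsto' (𝔈.h1 hζ.1 hζ.2 hAm Set.monotone_accumulate hcover) hAζ

lemma tendsto_E0_of_monotone (hT : 0 ≤ T) (hξ : ∀ n, ξ n ∈ 𝔈.domPos)
    (hξm : ∀ n, Measurable (ξ n)) (hmono : ∀ᵐ ω ∂μ, Monotone fun n => ξ n ω) {θ : Ω → ℝ}
    (hθ : θ ∈ 𝔈.domPos) (hθm : Measurable θ)
    (hlim : ∀ᵐ ω ∂μ, Tendsto (fun n => ξ n ω) atTop (𝓝 (θ ω))) :
    Tendsto (fun n => 𝔈.E0 (ξ n)) atTop (𝓝 (𝔈.E0 θ)) := by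
  have hE0mono : Monotone fun n => 𝔈.E0 (ξ n) := fun a b hab =>
    E0_mono hT (hξ a) (hξ b) (hmono.mono fun _ h => h hab)
  refine tendsto_atTop_isLUB hE0mono ⟨?_, fun b hb => ?_⟩
  · rintro _ ⟨n, rfl⟩
    refine E0_mono hT (hξ n) hθ ?_
    filter_upwards [hmono, hlim] with ω hω hωlim
    exact hω.ge_of_tendsto hωlim n
  · refine le_of_forall_pos_le_add fun ε hε => ?_
    refine E0_le_of_ae_exists_le hT hθ hθm hξ hξm hmono (fun n => hb ⟨n, rfl⟩) hε.le ?_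
    filter_upwards [hlim] with ω hω
    obtain ⟨n, hn⟩ := (hω.eventually (eventually_gt_nhds (sub_lt_self (θ ω) hε))).exists
    exact ⟨n, by linarith⟩

lemma ae_bddAbove_of_monotone (hT : 0 ≤ T) (hξ : ∀ n, ξ n ∈ 𝔈.domPos)
    (hξm : ∀ n, Measurable (ξ n)) (hmono : ∀ᵐ ω ∂μ, Monotone fun n => ξ n ω)
    (hbd : ∀ n, 𝔈.E0 (ξ n) ≤ t) : ∀ᵐ ω ∂μ, BddAbove (Set.range fun n => ξ n ω) := by
  set B := ⋂ k : ℕ, ⋃ n, {ω | (k : ℝ) ≤ ξ n ω}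
  have hBm : MeasurableSet B :=
    .iInter fun k => .iUnion fun n => measurableSet_le measurable_const (hξm n)
  -- On `B` the sequence is unbounded, so `E[k 1_B] ≤ t` for every `k`, against (H0).
  have hB : μ B = 0 := by
    by_contra hB
    have hkB : ∀ k : ℕ, 𝔈.E0 (B.indicator fun _ => (k : ℝ)) ≤ t := fun k => by
      simpa using E0_le_of_ae_exists_le hT
        (indicator_mem_domPos ⟨𝔈.const_mem k, .of_forall fun _ => k.cast_nonneg⟩ hBm)
        (measurable_const.indicator hBm) hξ hξm hmono hbd le_rfl <| by
          filter_upwards [(hξ 0).2] with ω hω0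
          by_cases hωB : ω ∈ B
          · simpa [hωB] using Set.mem_iInter.1 hωB k
          · exact ⟨0, by simpa [hωB] using hω0⟩
    obtain ⟨k, hk⟩ := ((𝔈.h0 hBm (pos_iff_ne_zero.2 hB)).eventually_gt_atTop t).exists
    exact (hkB k).not_gt hk
  filter_upwards [measure_eq_zero_iff_ae_notMem.1 hB] with ω hωB
  simp only [B, Set.mem_iInter, Set.mem_iUnion, Set.mem_ofPred_eq, not_forall, not_exists,
    not_le] at hωB
  obtain ⟨k, hk⟩ := hωB
  exact ⟨k, by rintro _ ⟨n, rfl⟩; exact (hk n).le⟩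

lemma iSup_mem_domPos_of_monotone (hT : 0 ≤ T) (hξ : ∀ n, ξ n ∈ 𝔈.domPos)
    (hξm : ∀ n, Measurable (ξ n)) (hmono : ∀ᵐ ω ∂μ, Monotone fun n => ξ n ω)
    (hbd : ∀ n, 𝔈.E0 (ξ n) ≤ t) :
    (fun ω => ⨆ n, ξ n ω) ∈ 𝔈.domPos ∧ (∀ n, ξ n ≤ᵐ[μ] fun ω => ⨆ n, ξ n ω) ∧
      Tendsto (fun n => 𝔈.E0 (ξ n)) atTop (𝓝 (𝔈.E0 fun ω => ⨆ n, ξ n ω)) := by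
  have hbdd := ae_bddAbove_of_monotone hT hξ hξm hmono hbd
  have hle : ∀ n, ξ n ≤ᵐ[μ] fun ω => ⨆ n, ξ n ω := fun n =>
    hbdd.mono fun ω hω => le_ciSup hω n
  have hlim : ∀ᵐ ω ∂μ, Tendsto (fun n => ξ n ω) atTop (𝓝 (⨆ n, ξ n ω)) := by
    filter_upwards [hmono, hbdd] with ω hω hωb
    exact tendsto_atTop_ciSup hω hωb
  have hmem : (fun ω => ⨆ n, ξ n ω) ∈ 𝔈.domPos :=
    ⟨𝔈.h5 (fun n => (hξ n).1) (fun n => (hξ n).2) hlim ⟨t, .of_forall hbd⟩,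
      (hξ 0).2.trans (hle 0)⟩
  exact ⟨hmem, hle,
    tendsto_E0_of_monotone hT hξ hξm hmono hmem (Measurable.iSup hξm) hlim⟩

variable {𝒢 : Set (Ω → ℝ)}

lemma ae_le_iSup_of_directed (hT : 0 ≤ T) (h𝒢 : 𝒢 ⊆ 𝔈.domPos)
    (h𝒢m : ∀ g ∈ 𝒢, Measurable g)
    (hdir : ∀ f ∈ 𝒢, ∀ g ∈ 𝒢, ∃ h ∈ 𝒢, h =ᵐ[μ] fun ω => max (f ω) (g ω))
    (hbdd : BddAbove (𝔈.E0 '' 𝒢)) (hξ𝒢 : ∀ n, ξ n ∈ 𝒢)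
    (hmono : ∀ᵐ ω ∂μ, Monotone fun n => ξ n ω) (hζ : (fun ω => ⨆ n, ξ n ω) ∈ 𝔈.domPos)
    (hζE : sSup (𝔈.E0 '' 𝒢) ≤ 𝔈.E0 fun ω => ⨆ n, ξ n ω) {f : Ω → ℝ} (hf : f ∈ 𝒢) :
    f ≤ᵐ[μ] fun ω => ⨆ n, ξ n ω := by
  choose χ hχ𝒢 hχ using fun n => hdir _ (hξ𝒢 n) f hf
  have hχmono : ∀ᵐ ω ∂μ, Monotone fun n => χ n ω := by
    filter_upwards [hmono, ae_all_iff.2 hχ] with ω hω hωχ a b hab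
    simpa only [hωχ] using max_le_max_right (f ω) (hω hab)
  obtain ⟨hθ, hχθ, hlim⟩ := iSup_mem_domPos_of_monotone hT (fun n => h𝒢 (hχ𝒢 n))
    (fun n => h𝒢m _ (hχ𝒢 n)) hχmono fun n => le_csSup hbdd ⟨_, hχ𝒢 n, rfl⟩
  have hζθ : (fun ω => ⨆ n, ξ n ω) ≤ᵐ[μ] fun ω => ⨆ n, χ n ω := by
    filter_upwards [ae_all_iff.2 hχ, ae_all_iff.2 hχθ] with ω hωχ hωθ
    exact ciSup_le fun n => (le_max_left _ (f ω)).trans ((hωχ n).symm.trans_le (hωθ n))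
  have hθE : 𝔈.E0 (fun ω => ⨆ n, χ n ω) ≤ 𝔈.E0 fun ω => ⨆ n, ξ n ω :=
    (le_of_tendsto' hlim fun n => le_csSup hbdd ⟨_, hχ𝒢 n, rfl⟩).trans hζE
  -- `⨆ χ n ≥ ⨆ ξ n` has no larger expectation, so strict monotonicity makes them equal.
  filter_upwards [hχ 0, hχθ 0, ae_eq_of_le_of_E0_le hT hζ hθ hζθ hθE] with ω hω0 hω0θ hωeq
  rw [hωeq]
  exact (le_max_right _ _).trans (hω0.symm.trans_le hω0θ)

lemma exists_isEssSupFam_of_directed (hT : 0 ≤ T) (hne : 𝒢.Nonempty) (h𝒢 : 𝒢 ⊆ 𝔈.domPos)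
    (h𝒢m : ∀ g ∈ 𝒢, Measurable g)
    (hdir : ∀ f ∈ 𝒢, ∀ g ∈ 𝒢, ∃ h ∈ 𝒢, h =ᵐ[μ] fun ω => max (f ω) (g ω))
    (hbdd : BddAbove (𝔈.E0 '' 𝒢)) :
    ∃ ζ ∈ 𝔈.domPos, IsEssSupFam μ 𝒢 ζ ∧ 𝔈.E0 ζ = sSup (𝔈.E0 '' 𝒢) := by
  have happrox : ∀ n : ℕ, ∃ f ∈ 𝒢, sSup (𝔈.E0 '' 𝒢) - 1 / (n + 1) < 𝔈.E0 f := fun n => by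
    obtain ⟨_, ⟨f, hf, rfl⟩, hlt⟩ :=
      exists_lt_of_lt_csSup (hne.image _) (sub_lt_self _ (Nat.one_div_pos_of_nat (α := ℝ)))
    exact ⟨f, hf, hlt⟩
  choose f hf𝒢 hf using happrox
  obtain ⟨ξ, hξ𝒢, hfξ, hmono⟩ := exists_ae_monotone_seq_of_directed hdir hf𝒢
  have hξt : ∀ n, 𝔈.E0 (ξ n) ≤ sSup (𝔈.E0 '' 𝒢) := fun n => le_csSup hbdd ⟨_, hξ𝒢 n, rfl⟩
  obtain ⟨hζ, -, hlim⟩ :=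
    iSup_mem_domPos_of_monotone hT (fun n => h𝒢 (hξ𝒢 n)) (fun n => h𝒢m _ (hξ𝒢 n)) hmono hξt
  have hζE : 𝔈.E0 (fun ω => ⨆ n, ξ n ω) = sSup (𝔈.E0 '' 𝒢) := by
    refine tendsto_nhds_unique hlim (tendsto_of_tendsto_of_tendsto_of_le_of_le ?_
      tendsto_const_nhds (fun n => (hf n).le.trans ?_) hξt)
    · simpa using tendsto_const_nhds.sub (tendsto_one_div_add_atTop_nhds_zero_nat (𝕜 := ℝ))
    · exact E0_mono hT (h𝒢 (hf𝒢 n)) (h𝒢 (hξ𝒢 n)) (hfξ n)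
  refine ⟨_, hζ, ⟨fun g hg => ?_, fun h hh => ?_⟩, hζE⟩
  · exact ae_le_iSup_of_directed hT h𝒢 h𝒢m hdir hbdd hξ𝒢 hmono hζ hζE.ge hg
  · filter_upwards [ae_all_iff.2 fun n => hh _ (hξ𝒢 n)] with ω hω
    exact ciSup_le hω

end FExp

namespace Admissible

variable {𝔈 : FExp μ T ℱ} {X : (Ω → ℝ) → Ω → ℝ} {σ ρ τ₁ τ₂ : Ω → ℝ}

lemma mem_domPos (hX : Admissible 𝔈 X) (hσ : Stop0 ℱ T σ) (hρ : IsStopIn ℱ T σ ρ) :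
    X ρ ∈ 𝔈.domPos :=
  ⟨(hX.1 ρ (hσ.trans hρ)).1, (hX.1 ρ (hσ.trans hρ)).2.1⟩

lemma indicator_cond_eq (hX : Admissible 𝔈 X) (hσ : Stop0 ℱ T σ) {A : Set Ω}
    (hA : MeasurableSet[hσ.1.measurableSpace] A) (h₁ : IsStopIn ℱ T σ τ₁)
    (h₂ : IsStopIn ℱ T σ τ₂) (h : ∀ ω ∈ A, τ₁ ω = τ₂ ω) :
    A.indicator (𝔈.cond σ (X τ₁)) =ᵐ[μ] A.indicator (𝔈.cond σ (X τ₂)) := by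
  refine FExp.indicator_cond_congr hσ hA (hX.mem_domPos hσ h₁) (hX.mem_domPos hσ h₂) ?_
  filter_upwards [hX.2 τ₁ τ₂ (hσ.trans h₁) (hσ.trans h₂)] with ω hω
  by_cases hωA : ω ∈ A
  · simp [hωA, hω (h ω hωA)]
  · simp [hωA]

lemma exists_cond_eq_max (hX : Admissible 𝔈 X) (hσ : Stop0 ℱ T σ) (h₁ : IsStopIn ℱ T σ τ₁)
    (h₂ : IsStopIn ℱ T σ τ₂) : ∃ τ₃, IsStopIn ℱ T σ τ₃ ∧
      𝔈.cond σ (X τ₃) =ᵐ[μ] fun ω => max (𝔈.cond σ (X τ₁) ω) (𝔈.cond σ (X τ₂) ω) := by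
  classical
  set A := {ω | 𝔈.cond σ (X τ₂) ω ≤ 𝔈.cond σ (X τ₁) ω}
  have hA : MeasurableSet[hσ.1.measurableSpace] A :=
    measurableSet_le (𝔈.cond_adapted hσ (hX.mem_domPos hσ h₂).1 (hX.mem_domPos hσ h₂).2)
      (𝔈.cond_adapted hσ (hX.mem_domPos hσ h₁).1 (hX.mem_domPos hσ h₁).2)
  have h₃ := IsStopIn.piecewise hσ.1 hA h₁ h₂
  refine ⟨_, h₃, ?_⟩
  filter_upwards [hX.indicator_cond_eq hσ hA h₃ h₁ fun ω => A.piecewise_eq_of_mem _ _,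
    hX.indicator_cond_eq hσ hA.compl h₃ h₂ fun ω => A.piecewise_eq_of_notMem _ _] with ω e₁ e₂
  by_cases hωA : ω ∈ A
  · rw [max_eq_left (show 𝔈.cond σ (X τ₂) ω ≤ 𝔈.cond σ (X τ₁) ω from hωA)]
    simpa [hωA] using e₁
  · rw [max_eq_right (not_le.1 (show ω ∉ A from hωA)).le]
    simpa [hωA] using e₂

end Admissible

def supE0Reward (𝔈 : FExp μ T ℱ) (X : (Ω → ℝ) → Ω → ℝ) (σ : Ω → ℝ) : ℝ :=
  sSup ((fun ρ => 𝔈.E0 (X ρ)) '' {ρ | IsStopIn ℱ T σ ρ})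

section Value

variable {𝔈 : FExp μ T ℱ} {X v : (Ω → ℝ) → Ω → ℝ} {σ τ : Ω → ℝ}

lemma BddRewardE0.bddAbove (hbdd : BddRewardE0 𝔈 X) (hσ : Stop0 ℱ T σ) :
    BddAbove ((fun ρ => 𝔈.E0 (X ρ)) '' {ρ | IsStopIn ℱ T σ ρ}) := by
  obtain ⟨C, hC⟩ := hbdd
  exact ⟨C, by rintro _ ⟨ρ, hρ, rfl⟩; exact hC ρ (hσ.trans hρ)⟩

variable [IsProbabilityMeasure μ]

lemma IsValueFam.E0_eq (hT : 0 ≤ T) (hv : IsValueFam 𝔈 X v) (hX : Admissible 𝔈 X)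
    (hbdd : BddRewardE0 𝔈 X) (hσ : Stop0 ℱ T σ) : 𝔈.E0 (v σ) = supE0Reward 𝔈 X σ := by
  set 𝒢 := {g | ∃ ρ, IsStopIn ℱ T σ ρ ∧ g = 𝔈.cond σ (X ρ)}
  have h𝒢 : 𝒢 ⊆ 𝔈.domPos := by
    rintro _ ⟨ρ, hρ, rfl⟩
    exact FExp.cond_mem_domPos hσ (hX.mem_domPos hσ hρ)
  have himage : 𝔈.E0 '' 𝒢 = (fun ρ => 𝔈.E0 (X ρ)) '' {ρ | IsStopIn ℱ T σ ρ} := by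
    ext r
    simp only [𝒢, Set.mem_image, Set.mem_ofPred_eq]
    refine ⟨?_, ?_⟩
    · rintro ⟨_, ⟨ρ, hρ, rfl⟩, rfl⟩
      exact ⟨ρ, hρ, (FExp.E0_cond hT hσ (hX.mem_domPos hσ hρ)).symm⟩
    · rintro ⟨ρ, hρ, rfl⟩
      exact ⟨_, ⟨ρ, hρ, rfl⟩, FExp.E0_cond hT hσ (hX.mem_domPos hσ hρ)⟩
  obtain ⟨ζ, hζ, hess, hζE⟩ := FExp.exists_isEssSupFam_of_directed (𝒢 := 𝒢) hT
    ⟨_, σ, IsStopIn.self hσ, rfl⟩ h𝒢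
    (by rintro _ ⟨ρ, hρ, rfl⟩; exact FExp.measurable_cond hσ (hX.mem_domPos hσ hρ))
    (by
      rintro _ ⟨τ₁, h₁, rfl⟩ _ ⟨τ₂, h₂, rfl⟩
      obtain ⟨τ₃, h₃, heq⟩ := hX.exists_cond_eq_max hσ h₁ h₂
      exact ⟨_, ⟨τ₃, h₃, rfl⟩, heq⟩)
    (himage ▸ hbdd.bddAbove hσ)
  have hvζ : v σ =ᵐ[μ] ζ := (hv σ hσ).ae_eq hess
  rw [supE0Reward, ← himage, ← hζE]
  exact FExp.E0_congr hT (FExp.mem_domPos_of_ae_eq hζ hvζ) hζ hvζ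

lemma supE0Reward_le_of_ae_le (hT : 0 ≤ T) (hX : Admissible 𝔈 X) (hbdd : BddRewardE0 𝔈 X)
    (hσ : Stop0 ℱ T σ) (hτ : Stop0 ℱ T τ) (hστ : ∀ᵐ ω ∂μ, σ ω ≤ τ ω) :
    supE0Reward 𝔈 X τ ≤ supE0Reward 𝔈 X σ := by
  refine csSup_le ⟨_, τ, IsStopIn.self hτ, rfl⟩ ?_
  rintro _ ⟨ρ, hρ, rfl⟩
  show 𝔈.E0 (X ρ) ≤ _
  have hρσ := hρ.max hσ
  have hXρ : X ρ =ᵐ[μ] X fun ω => max (ρ ω) (σ ω) := by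
    filter_upwards [hX.2 _ _ (hτ.trans hρ) (hσ.trans hρσ), hστ] with ω hω hωστ
    exact hω (max_eq_left (hωστ.trans (hρ.2.1 ω))).symm
  rw [FExp.E0_congr hT (hX.mem_domPos hτ hρ) (hX.mem_domPos hσ hρσ) hXρ]
  exact le_csSup (hbdd.bddAbove hσ) ⟨_, hρσ, rfl⟩

lemma tendsto_supE0Reward_of_RCE (hT : 0 ≤ T) (hX : Admissible 𝔈 X) (hXrce : RCE 𝔈 X)
    (hbdd : BddRewardE0 𝔈 X) (hτ : Stop0 ℱ T τ) {τs : ℕ → Ω → ℝ}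
    (hτs : ∀ n, Stop0 ℱ T (τs n))
    (hlim : ∀ᵐ ω ∂μ, Antitone (fun n => τs n ω) ∧ Tendsto (fun n => τs n ω) atTop (𝓝 (τ ω))) :
    Tendsto (fun n => supE0Reward 𝔈 X (τs n)) atTop (𝓝 (supE0Reward 𝔈 X τ)) := by
  have hle : ∀ n, supE0Reward 𝔈 X (τs n) ≤ supE0Reward 𝔈 X τ := fun n =>
    supE0Reward_le_of_ae_le hT hX hbdd hτ (hτs n) (hlim.mono fun ω h => h.1.le_of_tendsto h.2 n)
  refine tendsto_order.2 ⟨fun a ha => ?_, fun a ha => .of_forall fun n => (hle n).trans_lt ha⟩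
  obtain ⟨_, ⟨ρ, hρ, rfl⟩, haρ⟩ :=
    exists_lt_of_lt_csSup (Set.Nonempty.image _ ⟨τ, IsStopIn.self hτ⟩) ha
  have hρτs : Tendsto (fun n => 𝔈.E0 (X fun ω => max (ρ ω) (τs n ω))) atTop
      (𝓝 (𝔈.E0 (X ρ))) := by
    refine hXrce ρ (hτ.trans hρ) _ (fun n => (hτs n).trans (hρ.max (hτs n))) ?_
    filter_upwards [hlim] with ω hω
    refine ⟨fun a b hab => max_le_max le_rfl (hω.1 hab), ?_⟩
    have h := (tendsto_const_nhds (x := ρ ω)).max hω.2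
    rwa [max_eq_left (hρ.2.1 ω)] at h
  filter_upwards [hρτs.eventually (eventually_gt_nhds haρ)] with n hn
  exact hn.trans_le (le_csSup (hbdd.bddAbove (hτs n)) ⟨_, hρ.max (hτs n), rfl⟩)

end Value

/-- the value function family of an RCE admissible family is RCE. -/
theorem valueFam_RCE [IsProbabilityMeasure μ] (hT : 0 < T) (𝔈 : FExp μ T ℱ)
    (X v : (Ω → ℝ) → Ω → ℝ) (hX : Admissible 𝔈 X) (hXrce : RCE 𝔈 X)
    (hbdd : BddRewardE0 𝔈 X) (hv : IsValueFam 𝔈 X v) :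
    RCE 𝔈 v := by
  intro τ hτ τs hτs hlim
  rw [hv.E0_eq hT.le hX hbdd hτ]
  exact (tendsto_supE0Reward_of_RCE hT.le hX hXrce hbdd hτ hτs hlim).congr fun n =>
    (hv.E0_eq hT.le hX hbdd (hτs n)).symm

end OptMultStop
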